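/- The compact formula for the Chebyshev reproducing kernel holds: K_n(x,y) = D_n(θ₁+φ₁, θ₂+φ₂) + D_n(θ₁+φ₁, θ₂-φ₂) + D_n(θ₁-φ₁, θ₂+φ₂) + D_n(θ₁-φ₁, θ₂-φ₂), where x = (cos θ₁, cos θ₂), y = (cos φ₁, cos φ₂), and D_n(α,β) = ½ (cos((n+½)α)cos(α/2) - cos((n+½)β)cos(β/2)) / (cos α - cos β), valid whenever cos α ≠ cos β for each of the four arguments. -/
import Mathlib


open Real MeasureTheory Finset

/-- Evaluated Chebyshev polynomial of the first kind. -/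
noncomputable def chT (m : ℤ) (x : ℝ) : ℝ := (Polynomial.Chebyshev.T ℝ m).eval x

/-- First coordinates of Padua points. -/
noncomputable def padXi (n k : ℕ) : ℝ := Real.cos (k * π / n)

/-- Second coordinates of Padua points. -/
noncomputable def padEta (n k j : ℕ) : ℝ :=
  if Even k then Real.cos ((2 * (j : ℝ) - 1) * π / (n + 1))
  else Real.cos ((2 * (j : ℝ) - 2) * π / (n + 1))

/-- The set of Padua points of degree `n`. -/
noncomputable def Pad (n : ℕ) : Set (ℝ × ℝ) :=
  {p | ∃ k j : ℕ, k ≤ n ∧ 1 ≤ j ∧ j ≤ n / 2 + 1 ∧ p = (padXi n k, padEta n k j)}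

/-- Normalized Chebyshev polynomials. -/
noncomputable def chTtil (m : ℕ) (x : ℝ) : ℝ :=
  if m = 0 then 1 else Real.sqrt 2 * chT m x

/-- Orthonormal basis `P_k^m` of bivariate Chebyshev polynomials (functions). -/
noncomputable def chP (m k : ℕ) (x : ℝ × ℝ) : ℝ := chTtil (m - k) x.1 * chTtil k x.2

/-- Reproducing kernel of `Π_n²` in `L²(W)`. -/
noncomputable def kerK (n : ℕ) (x y : ℝ × ℝ) : ℝ :=
  ∑ m ∈ Finset.range (n + 1), ∑ j ∈ Finset.range (m + 1), chP m j x * chP m j y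

/-- Modified kernel `K_n^*`. -/
noncomputable def kerKstar (n : ℕ) (x y : ℝ × ℝ) : ℝ :=
  kerK n x y - chT n x.1 * chT n y.1

/-- The generators `Q_k^{n+1}` of the Padua ideal (as functions). -/
noncomputable def chQ (n k : ℕ) (x : ℝ × ℝ) : ℝ :=
  if k = 0 then chT (n + 1) x.1 - chT ((n : ℤ) - 1) x.1
  else chT ((n : ℤ) - k + 1) x.1 * chT k x.2 + chT ((n : ℤ) - k + 1) x.2 * chT ((k : ℤ) - 1) x.1

/-- The product Chebyshev weight on `[-1,1]²`. -/
noncomputable def chW (x : ℝ × ℝ) : ℝ :=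
  1 / (π ^ 2 * Real.sqrt (1 - x.1 ^ 2) * Real.sqrt (1 - x.2 ^ 2))

/-- Evaluation of a bivariate polynomial at a point of `ℝ²`. -/
noncomputable def ev2 (P : MvPolynomial (Fin 2) ℝ) (x : ℝ × ℝ) : ℝ :=
  MvPolynomial.eval (fun i : Fin 2 => if i = 0 then x.1 else x.2) P

/-- The function `D_n(α,β)` of the compact kernel formula. -/
noncomputable def Dker (n : ℕ) (α β : ℝ) : ℝ :=
  (1 / 2) * (Real.cos ((n + 1 / 2) * α) * Real.cos (α / 2)
      - Real.cos ((n + 1 / 2) * β) * Real.cos (β / 2)) / (Real.cos α - Real.cos β)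

noncomputable def wcos (k : ℕ) (α : ℝ) : ℝ :=
  (if k = 0 then (1:ℝ)/2 else 1) * Real.cos (k * α)

lemma tele_step (u v x y : ℝ) :
    (Real.cos (x + u) * Real.cos y - Real.cos x * Real.cos (y - v))
      - (Real.cos x * Real.cos (y + v) - Real.cos (x - u) * Real.cos y)
    = 2 * (Real.cos u - Real.cos v) * (Real.cos x * Real.cos y) := by
  simp only [Real.cos_add, Real.cos_sub]
  ring

lemma half_step_unused (M u : ℝ) :
    Real.cos ((M + 1 + 1/2) * u) * Real.cos (u/2)
      = Real.cos ((M + 1/2) * u) * Real.cos (u/2) - Real.sin ((M + 1) * u) * Real.sin u := by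
  have hs : Real.sin (2 * (u/2)) = 2 * Real.sin (u/2) * Real.cos (u/2) := Real.sin_two_mul _
  rw [show (2 * (u/2) : ℝ) = u by ring] at hs
  rw [show (M + 1 + 1/2) * u = (M + 1) * u + u/2 by ring,
    show (M + 1/2) * u = (M + 1) * u - u/2 by ring, Real.cos_add, Real.cos_sub]
  linear_combination (Real.sin ((M+1)*u)) * hs

lemma antidiag (u v : ℝ) (m : ℕ) (hm : 1 ≤ m) :
    (Real.cos u - Real.cos v) * ∑ j ∈ Finset.range (m+1), wcos (m - j) u * wcos j v
      = (1/2) * (Real.sin (m*v) * Real.sin v - Real.sin (m*u) * Real.sin u) := by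
  set M : ℝ := (m : ℝ) with hM
  set C : ℕ → ℝ := fun j => Real.cos ((M - j) * u) * Real.cos (j * v) with hC
  have hsplit : ∑ j ∈ Finset.range (m+1), wcos (m - j) u * wcos j v
      = (∑ j ∈ Finset.range (m+1), C j) - (1/2) * C 0 - (1/2) * C m := by
    have hc : ∀ j ∈ Finset.range (m+1), wcos (m - j) u * wcos j v
        = C j - (if j = 0 then (1/2) * C j else 0) - (if j = m then (1/2) * C j else 0) := by
      intro j hj
      have hjm : j ≤ m := Nat.lt_succ_iff.mp (Finset.mem_range.mp hj)
      have hcast : ((m - j : ℕ) : ℝ) = M - j := by rw [Nat.cast_sub hjm]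
      have hzero : m - j = 0 ↔ j = m := by omega
      simp only [wcos, hC]
      rw [hcast]
      simp only [hzero]
      split_ifs with h1 h2
      all_goals first | (exfalso; omega) | (push_cast; ring1)
    rw [Finset.sum_congr rfl hc]
    rw [Finset.sum_sub_distrib, Finset.sum_sub_distrib]
    congr 1
    · congr 1
      rw [Finset.sum_ite_eq' (Finset.range (m+1)) 0 (fun j => (1/2) * C j)]
      simp
    · rw [Finset.sum_ite_eq' (Finset.range (m+1)) m (fun j => (1/2) * C j)]
      simp
  -- telescoping
  set f : ℕ → ℝ := fun j => Real.cos ((M + 1 - j) * u) * Real.cos (j * v)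
      - Real.cos ((M - j) * u) * Real.cos ((j - 1) * v) with hf
  have htel : ∑ j ∈ Finset.range (m+1), (f j - f (j+1)) = f 0 - f (m+1) :=
    Finset.sum_range_sub' f (m+1)
  have hstep : ∀ j : ℕ, f j - f (j+1) = 2 * (Real.cos u - Real.cos v) * C j := by
    intro j
    have h := tele_step u v ((M - j) * u) ((j : ℝ) * v)
    simp only [hf, hC]
    push_cast
    rw [show (M + 1 - j) * u = (M - j) * u + u by ring,
      show ((j:ℝ) - 1) * v = (j:ℝ) * v - v by ring,
      show (M + 1 - ((j:ℝ) + 1)) * u = (M - j) * u by ring,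
      show (M - ((j:ℝ)+1)) * u = (M - j) * u - u by ring,
      show ((j:ℝ)+1) * v = (j:ℝ) * v + v by ring,
      show ((j:ℝ) + 1 - 1) * v = (j:ℝ) * v by ring]
    linarith [h]
  have htel2 : ∑ j ∈ Finset.range (m+1), 2 * (Real.cos u - Real.cos v) * C j = f 0 - f (m+1) := by
    rw [← htel]; exact Finset.sum_congr rfl fun j _ => (hstep j).symm
  have hmulsum : 2 * (Real.cos u - Real.cos v) * ∑ j ∈ Finset.range (m+1), C j
      = f 0 - f (m+1) := by
    rw [Finset.mul_sum]; exact htel2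
  have hf0 : f 0 = Real.cos ((M + 1) * u) - Real.cos (M * u) * Real.cos v := by
    simp only [hf, Nat.cast_zero]
    rw [show (M + 1 - 0) * u = (M+1)*u by ring, show ((0:ℝ) - 1) * v = -v by ring,
      show ((0:ℝ)) * v = 0 by ring, show (M - 0) * u = M * u by ring,
      Real.cos_neg, Real.cos_zero]
    ring
  have hfm : f (m+1) = Real.cos ((M + 1) * v) - Real.cos u * Real.cos (M * v) := by
    simp only [hf]
    push_cast
    rw [show (M + 1 - (M + 1)) * u = 0 by ring,
      show (M - (M + 1)) * u = -u by ring,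
      show (M + 1 - 1) * v = M * v by ring, Real.cos_neg, Real.cos_zero]
    ring
  have hC0 : C 0 = Real.cos (M * u) := by simp [hC]
  have hCm : C m = Real.cos (M * v) := by
    simp only [hC]
    rw [show (M - (m:ℝ)) * u = 0 by rw [hM]; ring, Real.cos_zero]
    ring
  rw [hsplit, hC0, hCm]
  have hexp1 : Real.cos ((M+1)*u) = Real.cos (M*u) * Real.cos u - Real.sin (M*u) * Real.sin u := by
    rw [show (M+1)*u = M*u + u by ring, Real.cos_add]
  have hexp2 : Real.cos ((M+1)*v) = Real.cos (M*v) * Real.cos v - Real.sin (M*v) * Real.sin v := by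
    rw [show (M+1)*v = M*v + v by ring, Real.cos_add]
  have := hmulsum
  rw [hf0, hfm, hexp1, hexp2] at this
  linarith [this]

lemma half_step' (M u : ℝ) :
    Real.cos ((M + 1 + 1/2) * u) * Real.cos (u/2)
      = Real.cos ((M + 1/2) * u) * Real.cos (u/2) - Real.sin ((M + 1) * u) * Real.sin u := by
  have hs : Real.sin (2 * (u/2)) = 2 * Real.sin (u/2) * Real.cos (u/2) := Real.sin_two_mul _
  rw [show (2 * (u/2) : ℝ) = u by ring] at hs
  rw [show (M + 1 + 1/2) * u = (M + 1) * u + u/2 by ring,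
    show (M + 1/2) * u = (M + 1) * u - u/2 by ring, Real.cos_add, Real.cos_sub]
  linear_combination (Real.sin ((M+1)*u)) * hs

lemma Gmul (u v : ℝ) (n : ℕ) :
    (Real.cos u - Real.cos v)
        * ∑ m ∈ Finset.range (n+1), ∑ j ∈ Finset.range (m+1), wcos (m - j) u * wcos j v
      = (1/2) * (Real.cos (((n:ℝ) + 1/2) * u) * Real.cos (u/2)
          - Real.cos (((n:ℝ) + 1/2) * v) * Real.cos (v/2)) := by
  induction n with
  | zero =>
    have hu := Real.cos_sq (u/2)
    have hv := Real.cos_sq (v/2)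
    rw [show 2 * (u/2) = u by ring] at hu
    rw [show 2 * (v/2) = v by ring] at hv
    simp [Finset.sum_range_one, wcos]
    push_cast
    rw [show ((2:ℝ)⁻¹) * u = u/2 by ring, show ((2:ℝ)⁻¹) * v = v/2 by ring]
    nlinarith [hu, hv]
  | succ n ih =>
    rw [Finset.sum_range_succ, mul_add, ih, antidiag u v (n+1) (by omega)]
    push_cast
    rw [show ((n:ℝ) + 1 + 1/2) = ((n:ℝ) + 1 + 1/2) by ring]
    have h1 := half_step' (n:ℝ) u
    have h2 := half_step' (n:ℝ) v
    linarith [h1, h2]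

lemma Gsum (u v : ℝ) (n : ℕ) (h : Real.cos u ≠ Real.cos v) :
    ∑ m ∈ Finset.range (n+1), ∑ j ∈ Finset.range (m+1), wcos (m - j) u * wcos j v
      = Dker n u v := by
  have h' : Real.cos u - Real.cos v ≠ 0 := sub_ne_zero.mpr h
  rw [Dker, eq_div_iff h']
  linear_combination Gmul u v n

lemma chT_cos (k : ℤ) (θ : ℝ) : chT k (Real.cos θ) = Real.cos (k * θ) := by
  simp [chT, Polynomial.Chebyshev.T_real_cos]

lemma chTtil_prod (k : ℕ) (θ φ : ℝ) :
    chTtil k (Real.cos θ) * chTtil k (Real.cos φ) = wcos k (θ + φ) + wcos k (θ - φ) := by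
  rcases eq_or_ne k 0 with rfl | hk
  · norm_num [chTtil, wcos]
  · have h2 : Real.sqrt 2 * Real.sqrt 2 = 2 := Real.mul_self_sqrt (by norm_num)
    simp only [chTtil, wcos, if_neg hk, chT_cos]
    push_cast
    rw [show (k:ℝ) * (θ + φ) = k*θ + k*φ by ring, show (k:ℝ) * (θ - φ) = k*θ - k*φ by ring,
      Real.cos_add, Real.cos_sub]
    linear_combination (Real.cos ((k:ℝ)*θ) * Real.cos ((k:ℝ)*φ)) * h2

/-- the compact formula for the Chebyshev reproducing kernel. -/
theorem kernel_compact_formula (n : ℕ) (θ₁ θ₂ φ₁ φ₂ : ℝ)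
    (h1 : Real.cos (θ₁ + φ₁) ≠ Real.cos (θ₂ + φ₂))
    (h2 : Real.cos (θ₁ + φ₁) ≠ Real.cos (θ₂ - φ₂))
    (h3 : Real.cos (θ₁ - φ₁) ≠ Real.cos (θ₂ + φ₂))
    (h4 : Real.cos (θ₁ - φ₁) ≠ Real.cos (θ₂ - φ₂)) :
    kerK n (Real.cos θ₁, Real.cos θ₂) (Real.cos φ₁, Real.cos φ₂) =
      Dker n (θ₁ + φ₁) (θ₂ + φ₂) + Dker n (θ₁ + φ₁) (θ₂ - φ₂)
        + Dker n (θ₁ - φ₁) (θ₂ + φ₂) + Dker n (θ₁ - φ₁) (θ₂ - φ₂) := by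
  have e : ∀ m j : ℕ, chP m j (Real.cos θ₁, Real.cos θ₂) * chP m j (Real.cos φ₁, Real.cos φ₂)
      = wcos (m-j) (θ₁+φ₁) * wcos j (θ₂+φ₂) + wcos (m-j) (θ₁+φ₁) * wcos j (θ₂-φ₂)
        + wcos (m-j) (θ₁-φ₁) * wcos j (θ₂+φ₂) + wcos (m-j) (θ₁-φ₁) * wcos j (θ₂-φ₂) := by
    intro m j
    have e1 := chTtil_prod (m-j) θ₁ φ₁
    have e2 := chTtil_prod j θ₂ φ₂
    simp only [chP]
    calc chTtil (m-j) (Real.cos θ₁, Real.cos θ₂).1 * chTtil j (Real.cos θ₁, Real.cos θ₂).2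
          * (chTtil (m-j) (Real.cos φ₁, Real.cos φ₂).1 * chTtil j (Real.cos φ₁, Real.cos φ₂).2)
        = (chTtil (m-j) (Real.cos θ₁) * chTtil (m-j) (Real.cos φ₁))
            * (chTtil j (Real.cos θ₂) * chTtil j (Real.cos φ₂)) := by ring
      _ = _ := by rw [e1, e2]; ring
  rw [kerK]
  calc ∑ m ∈ Finset.range (n+1), ∑ j ∈ Finset.range (m+1),
        chP m j (Real.cos θ₁, Real.cos θ₂) * chP m j (Real.cos φ₁, Real.cos φ₂)
      = ∑ m ∈ Finset.range (n+1), ∑ j ∈ Finset.range (m+1),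
          (wcos (m-j) (θ₁+φ₁) * wcos j (θ₂+φ₂) + wcos (m-j) (θ₁+φ₁) * wcos j (θ₂-φ₂)
            + wcos (m-j) (θ₁-φ₁) * wcos j (θ₂+φ₂) + wcos (m-j) (θ₁-φ₁) * wcos j (θ₂-φ₂)) :=
        Finset.sum_congr rfl fun m _ => Finset.sum_congr rfl fun j _ => e m j
    _ = (∑ m ∈ Finset.range (n+1), ∑ j ∈ Finset.range (m+1), wcos (m-j) (θ₁+φ₁) * wcos j (θ₂+φ₂))
        + (∑ m ∈ Finset.range (n+1), ∑ j ∈ Finset.range (m+1), wcos (m-j) (θ₁+φ₁) * wcos j (θ₂-φ₂))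
        + (∑ m ∈ Finset.range (n+1), ∑ j ∈ Finset.range (m+1), wcos (m-j) (θ₁-φ₁) * wcos j (θ₂+φ₂))
        + (∑ m ∈ Finset.range (n+1), ∑ j ∈ Finset.range (m+1), wcos (m-j) (θ₁-φ₁) * wcos j (θ₂-φ₂)) := by
        simp [Finset.sum_add_distrib]
    _ = _ := by rw [Gsum _ _ _ h1, Gsum _ _ _ h2, Gsum _ _ _ h3, Gsum _ _ _ h4]
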